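/- Let 0 < ε < 1. For Lebesgue-almost every irrational x ∈ (0,1), there exist infinitely many pairs consisting of an excess convergent p/q of x and a defect convergent p'/q' of x (p/q and p'/q' consecutive convergents) such that either 2e^{−2F}/(1+ε) < q'/q < 2e^{2F}/(1−ε) or 2e^{−2F}/(1+ε) < q/q' < 2e^{2F}/(1−ε), where F is the reciprocal Fibonacci constant. -/

import Mathlib

/-!
Since `F ≥ 1`, both intervals in the statement contain `[1, 4]`. Consecutive convergents lie on
opposite sides of `x`, and `q_{n+1} / q_n ∈ [1, a_{n+1} + 1]`, so it suffices that `a_{n+1} ≤ 3`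
for infinitely many `n`, i.e. that the orbit of `x` under the Gauss map `T x = {1/x}` visits
`[1/3, 1)` infinitely often (`a_{n+1} = ⌊1 / Tⁿ x⌋`).

The inverse branches `y ↦ 1 / (k + y)` of `T` are `1/k²`-Lipschitz on `[0, ∞)`. Hence preimages of
null sets under `T` are null, and the set of `x` whose whole orbit stays in `(0, 1/3)`, being
covered by its own images under the branches with `k ≥ 3`, has measure at most
`∑_{k ≥ 3} 1/k² ≤ 2/3` times its own, so it is null.
-/

open Filter Topology Set MeasureTheory Real
open scoped NNReal ENNReal

/-- The reciprocal Fibonacci constant `F = ∑_{n ≥ 1} 1/fib(n)`. -/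
noncomputable def recipFibConst : ℝ := ∑' n : ℕ, 1 / (Nat.fib (n + 1) : ℝ)

noncomputable def gaussMap (x : ℝ) : ℝ := Int.fract x⁻¹

def unitIrrationals : Set ℝ := {x | x ∈ Ioo 0 1 ∧ Irrational x}

lemma mapsTo_gaussMap : MapsTo gaussMap unitIrrationals unitIrrationals := by
  rintro x ⟨-, hx⟩
  have hirr : Irrational (gaussMap x) := by
    rw [gaussMap, ← Int.self_sub_floor]
    exact hx.inv.sub_intCast _
  exact ⟨⟨(Int.fract_nonneg _).lt_of_ne' hirr.ne_zero, Int.fract_lt_one _⟩, hirr⟩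

noncomputable def gaussBranch (k : ℕ) (y : ℝ) : ℝ := ((k : ℝ) + y)⁻¹

lemma gaussBranch_floor_inv_gaussMap {x : ℝ} (hx : 0 < x) :
    gaussBranch ⌊x⁻¹⌋₊ (gaussMap x) = x := by
  rw [gaussBranch, gaussMap, natCast_floor_eq_intCast_floor (inv_pos.2 hx).le,
    Int.floor_add_fract, inv_inv]

lemma lipschitzOnWith_gaussBranch {k : ℕ} (hk : 0 < k) :
    LipschitzOnWith ((k : ℝ≥0) ^ 2)⁻¹ (gaussBranch k) (Ici 0) := by
  rw [lipschitzOnWith_iff_dist_le_mul]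
  intro a (ha : 0 ≤ a) b (hb : 0 ≤ b)
  have hk' : (1 : ℝ) ≤ k := by exact_mod_cast hk
  have hka : 0 < (k : ℝ) + a := by linarith
  have hkb : 0 < (k : ℝ) + b := by linarith
  have hdiff : gaussBranch k a - gaussBranch k b = (b - a) / (((k : ℝ) + a) * ((k : ℝ) + b)) := by
    simp only [gaussBranch]
    field_simp
    ring
  rw [Real.dist_eq, Real.dist_eq, hdiff, abs_div, abs_of_pos (mul_pos hka hkb), abs_sub_comm,
    div_eq_inv_mul]
  push_cast
  gcongr
  nlinarith

lemma LipschitzOnWith.volume_image_le {K : ℝ≥0} {f : ℝ → ℝ} {s : Set ℝ}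
    (hf : LipschitzOnWith K f s) : volume (f '' s) ≤ K * volume s := by
  simpa [hausdorffMeasure_real] using hf.hausdorffMeasure_image_le (d := 1) zero_le_one

lemma volume_gaussBranch_image_le {k : ℕ} (hk : 0 < k) {s : Set ℝ} (hs : s ⊆ Ici 0) :
    volume (gaussBranch k '' s) ≤ ((k : ℝ≥0∞) ^ 2)⁻¹ * volume s := by
  have h := ((lipschitzOnWith_gaussBranch hk).mono hs).volume_image_le
  rwa [ENNReal.coe_inv (by positivity), ENNReal.coe_pow, ENNReal.coe_natCast] at h

lemma volume_inter_preimage_gaussMap {Z : Set ℝ} (hZ : volume Z = 0) :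
    volume (unitIrrationals ∩ gaussMap ⁻¹' Z) = 0 := by
  have hcover :
      unitIrrationals ∩ gaussMap ⁻¹' Z ⊆ ⋃ k : ℕ, gaussBranch (k + 1) '' (Z ∩ Ici 0) := by
    rintro x ⟨⟨⟨hx0, hx1⟩, -⟩, hxZ⟩
    have hk : 1 ≤ ⌊x⁻¹⌋₊ := Nat.le_floor (by simpa using (one_le_inv₀ hx0).2 hx1.le)
    refine mem_iUnion.2 ⟨⌊x⁻¹⌋₊ - 1, gaussMap x, ⟨hxZ, Int.fract_nonneg (x⁻¹)⟩, ?_⟩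
    rw [Nat.sub_add_cancel hk, gaussBranch_floor_inv_gaussMap hx0]
  refine measure_mono_null hcover (measure_iUnion_null fun k => ?_)
  refine le_antisymm ?_ zero_le
  calc volume (gaussBranch (k + 1) '' (Z ∩ Ici 0))
      ≤ _ := volume_gaussBranch_image_le k.succ_pos inter_subset_right
    _ = 0 := by rw [measure_mono_null inter_subset_left hZ, mul_zero]

lemma volume_inter_preimage_iterate_gaussMap {Z : Set ℝ} (hZ : volume Z = 0) (n : ℕ) :
    volume (unitIrrationals ∩ gaussMap^[n] ⁻¹' Z) = 0 := by
  induction n with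
  | zero => exact measure_mono_null inter_subset_right hZ
  | succ n ih =>
    refine measure_mono_null ?_ (volume_inter_preimage_gaussMap ih)
    rintro x ⟨hx, hxZ⟩
    exact ⟨hx, mapsTo_gaussMap hx, by rwa [mem_preimage, ← Function.iterate_succ_apply]⟩

lemma tsum_inv_sq_add_three_le :
    ∑' k : ℕ, (((k + 3 : ℕ) : ℝ≥0∞) ^ 2)⁻¹ ≤ 2 / 3 := by
  refine ENNReal.tsum_le_of_sum_range_le fun n => ?_
  have hreal : ∑ k ∈ Finset.range n, (((k + 3 : ℕ) : ℝ) ^ 2)⁻¹ ≤ 2 / 3 := by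
    have := sum_Ioo_inv_sq_le (α := ℝ) 2 (n + 3)
    rw [← Finset.Ico_succ_left_eq_Ioo, Finset.sum_Ico_eq_sum_range] at this
    norm_num [add_comm] at this ⊢
    exact this
  have hterm (k : ℕ) :
      (((k + 3 : ℕ) : ℝ≥0∞) ^ 2)⁻¹ = ENNReal.ofReal ((((k + 3 : ℕ) : ℝ) ^ 2)⁻¹) := by
    rw [ENNReal.ofReal_inv_of_pos (by positivity), ENNReal.ofReal_pow (Nat.cast_nonneg _),
      ENNReal.ofReal_natCast]
  simp_rw [hterm]
  rw [← ENNReal.ofReal_sum_of_nonneg fun _ _ => by positivity]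
  calc ENNReal.ofReal _ ≤ ENNReal.ofReal (2 / 3) := ENNReal.ofReal_le_ofReal hreal
    _ = 2 / 3 := by rw [ENNReal.ofReal_div_of_pos (by norm_num)]; norm_num

lemma volume_setOf_forall_iterate_gaussMap_lt :
    volume {x | x ∈ unitIrrationals ∧ ∀ n, gaussMap^[n] x < 1 / 3} = 0 := by
  set A := {x | x ∈ unitIrrationals ∧ ∀ n, gaussMap^[n] x < 1 / 3}
  have hcover : A ⊆ ⋃ k : ℕ, gaussBranch (k + 3) '' A := by
    rintro x ⟨hxU, hlt⟩
    have hx0 : 0 < x := hxU.1.1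
    have hk : 3 ≤ ⌊x⁻¹⌋₊ := Nat.le_floor <| by
      have := hlt 0
      rw [Function.iterate_zero_apply] at this
      rw [le_inv_comm₀ (by norm_num) hx0]; push_cast; linarith
    refine mem_iUnion.2 ⟨⌊x⁻¹⌋₊ - 3, gaussMap x, ⟨mapsTo_gaussMap hxU, fun n => ?_⟩, ?_⟩
    · rw [← Function.iterate_succ_apply]; exact hlt (n + 1)
    · rw [Nat.sub_add_cancel hk, gaussBranch_floor_inv_gaussMap hx0]
  have hA0 : A ⊆ Ici 0 := fun x hx => hx.1.1.1.le
  have hcontract : volume A ≤ 2 / 3 * volume A :=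
    calc volume A ≤ ∑' k : ℕ, volume (gaussBranch (k + 3) '' A) :=
          (measure_mono hcover).trans (measure_iUnion_le _)
      _ ≤ ∑' k : ℕ, (((k + 3 : ℕ) : ℝ≥0∞) ^ 2)⁻¹ * volume A :=
          ENNReal.tsum_le_tsum fun k => volume_gaussBranch_image_le (by omega) hA0
      _ = (∑' k : ℕ, (((k + 3 : ℕ) : ℝ≥0∞) ^ 2)⁻¹) * volume A := ENNReal.tsum_mul_right
      _ ≤ 2 / 3 * volume A := by gcongr; exact tsum_inv_sq_add_three_le
  have hfin : volume A ≠ ⊤ :=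
    ne_top_of_le_ne_top (b := volume (Ioo (0 : ℝ) 1)) (by simp) (measure_mono fun x hx => hx.1.1)
  by_contra h0
  have hlt : 2 / 3 * volume A < 1 * volume A :=
    (ENNReal.mul_lt_mul_iff_left h0 hfin).2 <| by
      rw [ENNReal.div_lt_iff (by norm_num) (by norm_num)]; norm_num
  rw [one_mul] at hlt
  exact (hcontract.trans_lt hlt).false

lemma ae_frequently_one_third_le_iterate_gaussMap :
    ∀ᵐ x, x ∈ unitIrrationals → ∃ᶠ n in atTop, 1 / 3 ≤ gaussMap^[n] x := by
  set A := {x | x ∈ unitIrrationals ∧ ∀ n, gaussMap^[n] x < 1 / 3}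
  have hnull : volume (⋃ N, unitIrrationals ∩ gaussMap^[N] ⁻¹' A) = 0 :=
    measure_iUnion_null fun N =>
      volume_inter_preimage_iterate_gaussMap volume_setOf_forall_iterate_gaussMap_lt N
  filter_upwards [measure_eq_zero_iff_ae_notMem.1 hnull] with x hx hxU
  by_contra hnot
  obtain ⟨N, hN⟩ := eventually_atTop.1 (not_frequently.1 hnot)
  refine hx (mem_iUnion.2 ⟨N, hxU, (mapsTo_gaussMap.iterate N) hxU, fun n => ?_⟩)
  rw [← Function.iterate_add_apply]
  exact lt_of_not_ge (hN _ (Nat.le_add_left N n))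

namespace GenContFract

variable {K : Type*} [Field K] [LinearOrder K] [IsStrictOrderedRing K] [FloorRing K] {v : K}

lemma of_contsAux_b_le_succ (n : ℕ) :
    ((GenContFract.of v).contsAux n).b ≤ ((GenContFract.of v).contsAux (n + 1)).b := by
  cases n with
  | zero => simp [zeroth_contAux_eq_one_zero, first_contAux_eq_h_one]
  | succ n =>
    simpa only [den_eq_conts_b, nth_cont_eq_succ_nth_contAux] using of_den_mono (v := v) (n := n)

lemma of_dens_succ_le {n : ℕ} {b : K} (h : (GenContFract.of v).s.get? n = some ⟨1, b⟩) :
    (GenContFract.of v).dens (n + 1) ≤ (b + 1) * (GenContFract.of v).dens n := by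
  rw [den_eq_conts_b, den_eq_conts_b, nth_cont_eq_succ_nth_contAux, nth_cont_eq_succ_nth_contAux,
    contsAux_recurrence h rfl rfl]
  linarith [of_contsAux_b_le_succ (v := v) n]

lemma of_dens_pos_of_not_terminates (h : ¬(GenContFract.of v).Terminates) (n : ℕ) :
    0 < (GenContFract.of v).dens n := by
  have hfib := succ_nth_fib_le_of_nth_den (v := v) (n := n) (Or.inr fun ht => h ⟨_, ht⟩)
  exact lt_of_lt_of_le (by exact_mod_cast Nat.fib_pos.2 n.succ_pos) hfib

end GenContFract

open GenContFract

lemma of_dens_pos_of_irrational {x : ℝ} (hx : Irrational x) (n : ℕ) :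
    0 < (GenContFract.of x).dens n :=
  of_dens_pos_of_not_terminates (fun h => by
    obtain ⟨q, rfl⟩ := (terminates_iff_rat x).1 h
    exact q.not_irrational hx) n

lemma stream_eq_some_iterate_gaussMap {x : ℝ} (hx : x ∈ unitIrrationals) (n : ℕ) :
    ∃ b : ℤ, IntFractPair.stream x n = some ⟨b, gaussMap^[n] x⟩ := by
  induction n with
  | zero =>
    refine ⟨0, ?_⟩
    rw [IntFractPair.stream_zero, IntFractPair.of, Int.floor_eq_zero_iff.2 ⟨hx.1.1.le, hx.1.2⟩,
      Int.fract_eq_self.2 ⟨hx.1.1.le, hx.1.2⟩, Function.iterate_zero_apply]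
  | succ n ih =>
    obtain ⟨b, hb⟩ := ih
    refine ⟨⌊(gaussMap^[n] x)⁻¹⌋, ?_⟩
    rw [IntFractPair.stream_succ_of_some hb ((mapsTo_gaussMap.iterate n) hx).2.ne_zero,
      Function.iterate_succ_apply']
    rfl

lemma of_s_get?_eq_floor_inv_iterate_gaussMap {x : ℝ} (hx : x ∈ unitIrrationals) (n : ℕ) :
    (GenContFract.of x).s.get? n = some ⟨1, ⌊(gaussMap^[n] x)⁻¹⌋⟩ := by
  obtain ⟨b, hb⟩ := stream_eq_some_iterate_gaussMap hx n
  exact get?_of_eq_some_of_succ_get?_intFractPair_stream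
    (IntFractPair.stream_succ_of_some hb ((mapsTo_gaussMap.iterate n) hx).2.ne_zero)

lemma neg_one_pow_mul_sub_convs_pos {x : ℝ} (hx : x ∈ unitIrrationals) (n : ℕ) :
    0 < (-1) ^ n * (x - (GenContFract.of x).convs n) := by
  obtain ⟨b, hb⟩ := stream_eq_some_iterate_gaussMap hx n
  have hfr : 0 < gaussMap^[n] x := ((mapsTo_gaussMap.iterate n) hx).1.1
  have hB : 0 < ((GenContFract.of x).contsAux (n + 1)).b := by
    simpa only [den_eq_conts_b, nth_cont_eq_succ_nth_contAux] using
      of_dens_pos_of_irrational hx.2 n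
  have hpB : 0 ≤ ((GenContFract.of x).contsAux n).b := zero_le_of_contsAux_b
  have h := sub_convs_eq hb
  simp only [hfr.ne', if_false] at h
  rw [h, ← mul_div_assoc, ← pow_add, ← two_mul, pow_mul, neg_one_sq, one_pow]
  positivity

lemma convs_lt_of_even {x : ℝ} (hx : x ∈ unitIrrationals) {n : ℕ} (hn : Even n) :
    (GenContFract.of x).convs n < x := by
  have h := neg_one_pow_mul_sub_convs_pos hx n
  rw [hn.neg_one_pow, one_mul] at h
  linarith

lemma lt_convs_of_odd {x : ℝ} (hx : x ∈ unitIrrationals) {n : ℕ} (hn : Odd n) :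
    x < (GenContFract.of x).convs n := by
  have h := neg_one_pow_mul_sub_convs_pos hx n
  rw [hn.neg_one_pow, neg_one_mul] at h
  linarith

lemma exists_convs_ge_and_convs_le {x : ℝ} (hx : x ∈ unitIrrationals) (n : ℕ) :
    ∃ i j : ℕ, ((i = n ∧ j = n + 1) ∨ (i = n + 1 ∧ j = n)) ∧
      x ≤ (GenContFract.of x).convs i ∧ (GenContFract.of x).convs j ≤ x := by
  rcases Nat.even_or_odd n with hn | hn
  · exact ⟨n + 1, n, Or.inr ⟨rfl, rfl⟩, (lt_convs_of_odd hx hn.add_one).le,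
      (convs_lt_of_even hx hn).le⟩
  · exact ⟨n, n + 1, Or.inl ⟨rfl, rfl⟩, (lt_convs_of_odd hx hn).le,
      (convs_lt_of_even hx hn.add_one).le⟩

lemma one_le_dens_succ_div_dens_le_four {x : ℝ} (hx : x ∈ unitIrrationals) {n : ℕ}
    (hn : 1 / 3 ≤ gaussMap^[n] x) :
    1 ≤ (GenContFract.of x).dens (n + 1) / (GenContFract.of x).dens n ∧
      (GenContFract.of x).dens (n + 1) / (GenContFract.of x).dens n ≤ 4 := by
  have hpos := of_dens_pos_of_irrational hx.2 n
  have hfloor : (⌊(gaussMap^[n] x)⁻¹⌋ : ℝ) ≤ 3 :=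
    (Int.floor_le _).trans <| by
      rw [inv_le_comm₀ ((mapsTo_gaussMap.iterate n) hx).1.1 (by norm_num)]; linarith
  have hle := of_dens_succ_le (of_s_get?_eq_floor_inv_iterate_gaussMap hx n)
  rw [one_le_div hpos, div_le_iff₀ hpos]
  exact ⟨of_den_mono, by nlinarith⟩

lemma summable_one_div_fib_succ : Summable fun n : ℕ => 1 / (Nat.fib (n + 1) : ℝ) := by
  have hfib (n : ℕ) : (0 : ℝ) < Nat.fib (n + 1) := by exact_mod_cast Nat.fib_pos.2 n.succ_pos
  have hratio : (fun n : ℕ => ‖1 / (Nat.fib (n + 1 + 1) : ℝ)‖ / ‖1 / (Nat.fib (n + 1) : ℝ)‖) =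
      fun n => (Nat.fib (n + 1) : ℝ) / Nat.fib (n + 1 + 1) := by
    funext n
    have := hfib n
    have := hfib (n + 1)
    rw [norm_of_nonneg (by positivity), norm_of_nonneg (by positivity)]
    field_simp
  refine summable_of_ratio_test_tendsto_lt_one (l := -goldenConj)
    (by linarith [neg_one_lt_goldenConj])
    (Eventually.of_forall fun n => (one_div_pos.2 (hfib n)).ne') ?_
  rw [hratio]
  exact tendsto_fib_div_fib_succ_atTop.comp (tendsto_add_atTop_nat 1)

lemma one_le_recipFibConst : 1 ≤ recipFibConst := by
  have h := summable_one_div_fib_succ.sum_le_tsum (Finset.range 1) (fun n _ => by positivity)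
  simpa [recipFibConst] using h

lemma three_le_exp_two_mul_recipFibConst : 3 ≤ exp (2 * recipFibConst) := by
  have := add_one_le_exp (2 * recipFibConst)
  linarith [one_le_recipFibConst]

lemma two_mul_exp_neg_div_lt_one {ε : ℝ} (hε : 0 < ε) :
    2 * exp (-(2 * recipFibConst)) / (1 + ε) < 1 := by
  have h3 := three_le_exp_two_mul_recipFibConst
  rw [div_lt_one (by linarith), exp_neg, ← div_eq_mul_inv, div_lt_iff₀ (by linarith)]
  nlinarith

lemma four_lt_two_mul_exp_div {ε : ℝ} (hε0 : 0 < ε) (hε1 : ε < 1) :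
    4 < 2 * exp (2 * recipFibConst) / (1 - ε) := by
  have h3 := three_le_exp_two_mul_recipFibConst
  rw [lt_div_iff₀ (by linarith)]
  nlinarith

/-- **Corollary 1.** Given `0 < ε < 1`, for Lebesgue-almost every irrational
`x ∈ (0,1)` there are infinitely many pairs of consecutive convergents, one an excess
approximation `p/q` of `x` and the other a defect approximation `p'/q'` of `x`, with
`2e^{−2F}/(1+ε) < q'/q < 2e^{2F}/(1−ε)` or `2e^{−2F}/(1+ε) < q/q' < 2e^{2F}/(1−ε)`. -/
theorem poncelet_stmt10
    (ε : ℝ) (hε0 : 0 < ε) (hε1 : ε < 1) :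
    ∀ᵐ x ∂(volume.restrict (Ioo (0 : ℝ) 1)), Irrational x →
      {n : ℕ | ∃ i j : ℕ,
        ((i = n ∧ j = n + 1) ∨ (i = n + 1 ∧ j = n)) ∧
        x ≤ (GenContFract.of x).convs i ∧
        (GenContFract.of x).convs j ≤ x ∧
        ((2 * exp (-(2 * recipFibConst)) / (1 + ε) <
              (GenContFract.of x).dens j / (GenContFract.of x).dens i ∧
            (GenContFract.of x).dens j / (GenContFract.of x).dens i <
              2 * exp (2 * recipFibConst) / (1 - ε)) ∨
          (2 * exp (-(2 * recipFibConst)) / (1 + ε) <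
              (GenContFract.of x).dens i / (GenContFract.of x).dens j ∧
            (GenContFract.of x).dens i / (GenContFract.of x).dens j <
              2 * exp (2 * recipFibConst) / (1 - ε)))}.Infinite := by
  have hlower := two_mul_exp_neg_div_lt_one hε0
  have hupper := four_lt_two_mul_exp_div hε0 hε1
  filter_upwards [ae_restrict_mem measurableSet_Ioo,
    ae_restrict_of_ae ae_frequently_one_third_le_iterate_gaussMap] with x hx01 hfreq hirr
  have hx : x ∈ unitIrrationals := ⟨hx01, hirr⟩
  refine Nat.frequently_atTop_iff_infinite.1 ((hfreq hx).mono fun n hn => ?_)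
  obtain ⟨hratio_ge, hratio_le⟩ := one_le_dens_succ_div_dens_le_four hx hn
  obtain ⟨i, j, hij, hi, hj⟩ := exists_convs_ge_and_convs_le hx n
  refine ⟨i, j, hij, hi, hj, ?_⟩
  rcases hij with ⟨rfl, rfl⟩ | ⟨rfl, rfl⟩
  · exact Or.inl ⟨by linarith, by linarith⟩
  · exact Or.inr ⟨by linarith, by linarith⟩
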